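/- arXiv:1705.10917 — 6 statements merged into one kernel-verified Lean document; each statement's English description precedes it below -/
import Mathlib

section
/- Let f : ℝⁿ → ℝ be a nonconstant polynomial with n ≥ 2. If the zero set Z(f) = {x ∈ ℝⁿ | f(x) = 0} is compact, then f is bounded from below on ℝⁿ or f is bounded from above on ℝⁿ. -/
open MvPolynomial Set Asymptotics Filter

/-- The exponent vector of a monomial, viewed in `ℝⁿ`. -/
noncomputable def expR {n : ℕ} (α : Fin n →₀ ℕ) : Fin n → ℝ := fun i => (α i : ℝ)

/-- The Newton polyhedron (at infinity) of a polynomial: the convex hull of its exponents. -/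
noncomputable def Newton {n : ℕ} (f : MvPolynomial (Fin n) ℝ) : Set (Fin n → ℝ) :=
  convexHull ℝ (expR '' (f.support : Set (Fin n →₀ ℕ)))

/-- `d(q, Γ(f))`: the minimal value of `⟨q, ·⟩` on the Newton polyhedron. -/
noncomputable def dMin {n : ℕ} (q : Fin n → ℝ) (f : MvPolynomial (Fin n) ℝ) : ℝ :=
  sInf ((fun α : Fin n → ℝ => ∑ i, q i * α i) '' Newton f)

/-- `Δ(q, Γ(f))`: the face of the Newton polyhedron where `⟨q, ·⟩` attains its minimum. -/
noncomputable def face {n : ℕ} (q : Fin n → ℝ) (f : MvPolynomial (Fin n) ℝ) : Set (Fin n → ℝ) :=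
  {α ∈ Newton f | ∑ i, q i * α i = dMin q f}

/-- The Newton boundary at infinity: faces `Δ(q, Γ(f))` with `min_j q_j < 0`. -/
noncomputable def NewtonBoundary {n : ℕ} (f : MvPolynomial (Fin n) ℝ) : Set (Set (Fin n → ℝ)) :=
  {Δ | ∃ q : Fin n → ℝ, (∃ j, q j < 0) ∧ Δ = face q f}

open Classical in
/-- The truncation `f_Δ` of `f` to a face `Δ`. -/
noncomputable def trunc {n : ℕ} (f : MvPolynomial (Fin n) ℝ) (Δ : Set (Fin n → ℝ)) :
    MvPolynomial (Fin n) ℝ :=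
  ∑ α ∈ f.support.filter (fun α => expR α ∈ Δ), monomial α (f.coeff α)

/-- `𝒫(x) = Σ_{α ∈ Γ(f) ∩ ℤ₊ⁿ} |x^α|`. -/
noncomputable def P {n : ℕ} (f : MvPolynomial (Fin n) ℝ) (x : Fin n → ℝ) : ℝ :=
  ∑' α : {α : Fin n →₀ ℕ // expR α ∈ Newton f}, |∏ i, x i ^ ((α : Fin n →₀ ℕ) i)|

/-- Non-degeneracy at infinity. -/
def Nondeg {n : ℕ} (f : MvPolynomial (Fin n) ℝ) : Prop :=
  ∀ Δ ∈ NewtonBoundary f, ¬ ∃ x : Fin n → ℝ, (∀ i, x i ≠ 0) ∧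
    eval x (trunc f Δ) = 0 ∧ ∀ i, eval x (pderiv i (trunc f Δ)) = 0

/-- The norm of a polynomial: the maximum of the absolute values of its coefficients. -/
noncomputable def polyNorm {n : ℕ} (f : MvPolynomial (Fin n) ℝ) : ℝ :=
  ⨆ α ∈ f.support, |f.coeff α|

/-- Stable compactness of the zero set of `f`. -/
def StablyCompact {n : ℕ} (f : MvPolynomial (Fin n) ℝ) : Prop :=
  ∃ ε > 0, ∀ g : MvPolynomial (Fin n) ℝ, Newton g ⊆ Newton f → polyNorm g < ε →
    IsCompact {x : Fin n → ℝ | eval x (f + g) = 0}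

open Metric

theorem isPreconnected_setOf_lt_norm {E : Type*} [NormedAddCommGroup E] [NormedSpace ℝ E]
    (h : 1 < Module.rank ℝ E) {R : ℝ} (hR : 0 ≤ R) : IsPreconnected {x : E | R < ‖x‖} := by
  have himage : (fun p : E × ℝ => p.2 • p.1) '' (sphere 0 1 ×ˢ Ioi R) = {x : E | R < ‖x‖} := by
    ext x
    constructor
    · rintro ⟨⟨u, t⟩, ⟨hu, ht⟩, rfl⟩
      rw [mem_sphere_zero_iff_norm] at hu
      simp only [mem_ofPred_eq, norm_smul, hu, mul_one, Real.norm_of_nonneg (hR.trans ht.le)]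
      exact ht
    · intro hx
      have hx0 : ‖x‖ ≠ 0 := (hR.trans_lt hx).ne'
      refine ⟨(‖x‖⁻¹ • x, ‖x‖), ⟨?_, hx⟩, ?_⟩
      · simp [norm_smul, hx0]
      · simp [smul_smul, hx0]
  rw [← himage]
  exact ((isPreconnected_sphere h 0 1).prod isPreconnected_Ioi).image _ (by fun_prop)

theorem IsPreconnected.forall_pos_or_forall_neg {X : Type*} [TopologicalSpace X] {s : Set X}
    (hs : IsPreconnected s) {f : X → ℝ} (hf : ContinuousOn f s) (hf0 : ∀ x ∈ s, f x ≠ 0) :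
    (∀ x ∈ s, 0 < f x) ∨ ∀ x ∈ s, f x < 0 := by
  by_contra! ⟨⟨a, ha, hfa⟩, b, hb, hfb⟩
  obtain ⟨c, hc, hfc⟩ := hs.intermediate_value ha hb hf ⟨hfa, hfb⟩
  exact hf0 c hc hfc

theorem Continuous.bddBelow_range_or_bddAbove_range_of_isBounded_zeroSet {E : Type*}
    [NormedAddCommGroup E] [NormedSpace ℝ E] [ProperSpace E] (h : 1 < Module.rank ℝ E)
    {f : E → ℝ} (hf : Continuous f) (hZ : Bornology.IsBounded {x | f x = 0}) :
    BddBelow (range f) ∨ BddAbove (range f) := by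
  obtain ⟨R, hR, hZR⟩ := hZ.subset_closedBall_lt 0 0
  have hrange : range f ⊆ f '' closedBall 0 R ∪ f '' {x | R < ‖x‖} := by
    rintro - ⟨x, rfl⟩
    rcases le_or_gt ‖x‖ R with hx | hx
    · exact Or.inl (mem_image_of_mem f (mem_closedBall_zero_iff.mpr hx))
    · exact Or.inr (mem_image_of_mem f hx)
  have hball := isCompact_closedBall (0 : E) R
  have hf0 : ∀ x ∈ {x : E | R < ‖x‖}, f x ≠ 0 := fun x hx hfx =>
    (mem_closedBall_zero_iff.mp (hZR hfx)).not_gt hx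
  rcases (isPreconnected_setOf_lt_norm h hR.le).forall_pos_or_forall_neg hf.continuousOn hf0
    with hpos | hneg
  · refine .inl ((hball.bddBelow_image hf.continuousOn).union ⟨0, ?_⟩ |>.mono hrange)
    rintro - ⟨x, hx, rfl⟩
    exact (hpos x hx).le
  · refine .inr ((hball.bddAbove_image hf.continuousOn).union ⟨0, ?_⟩ |>.mono hrange)
    rintro - ⟨x, hx, rfl⟩
    exact (hneg x hx).le

theorem stmt0_general {n : ℕ} (hn : 2 ≤ n) (f : MvPolynomial (Fin n) ℝ)
    (hc : IsCompact {x : Fin n → ℝ | eval x f = 0}) :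
    (∃ m : ℝ, ∀ x : Fin n → ℝ, m ≤ eval x f) ∨ (∃ M : ℝ, ∀ x : Fin n → ℝ, eval x f ≤ M) := by
  have hrank : 1 < Module.rank ℝ (Fin n → ℝ) := by
    rw [rank_fin_fun]
    exact_mod_cast hn
  exact (f.continuous_eval.bddBelow_range_or_bddAbove_range_of_isBounded_zeroSet hrank
    hc.isBounded).imp (fun ⟨m, hm⟩ => ⟨m, fun x => hm ⟨x, rfl⟩⟩)
    (fun ⟨M, hM⟩ => ⟨M, fun x => hM ⟨x, rfl⟩⟩)

theorem stmt0 {n : ℕ} (hn : 2 ≤ n) (f : MvPolynomial (Fin n) ℝ) (hf : f.totalDegree ≠ 0)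
    (hc : IsCompact {x : Fin n → ℝ | eval x f = 0}) :
    (∃ m : ℝ, ∀ x : Fin n → ℝ, m ≤ eval x f) ∨ (∃ M : ℝ, ∀ x : Fin n → ℝ, eval x f ≤ M) :=
  stmt0_general hn f hc
end

section
/- Let f = Σ_α a_α x^α : ℝⁿ → ℝ be a nonconstant polynomial with n ≥ 2 whose zero set Z(f) is compact. If f is bounded from below on ℝⁿ, then for every face Δ of the Newton polyhedron Γ(f) of the form Δ = Δ(q, Γ(f)) with min_j q_j < 0, the face polynomial f_Δ(x) = Σ_{α ∈ Δ} a_α x^α is nonnegative on all of ℝⁿ. -/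
open MvPolynomial Set Asymptotics Filter

/-!
If `f_Δ(x) < 0` for a face `Δ = Δ(q, Γ(f))` with `q_j < 0`, perturb `x` so that `x_j ≠ 0` and
follow the monomial curve `φ(t) = (x_i t^{q_i})_i` as `t → 0⁺`. Along it
`t^{-d(q, Γ(f))} f(φ(t)) → f_Δ(x) < 0` while `‖φ(t)‖ → ∞`. But `f > 0` near infinity: its zero
set is bounded, the complement of a large ball is connected because `n ≥ 2`, and `f`, bounded
below and nonconstant, hence unbounded above, is positive somewhere there.
-/

open Bornology Metric Topology

section Connected

variable {E : Type*} [NormedAddCommGroup E] [NormedSpace ℝ E]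

theorem isPreconnected_compl_closedBall (hE : 1 < Module.rank ℝ E) {r : ℝ} (hr : 0 ≤ r) :
    IsPreconnected (closedBall (0 : E) r)ᶜ := by
  have hpolar :
      (closedBall (0 : E) r)ᶜ = (fun p : ℝ × E => p.1 • p.2) '' (Ioi r ×ˢ sphere 0 1) := by
    ext y
    simp only [mem_compl_iff, mem_closedBall, dist_zero_right, not_le, mem_image, mem_prod,
      mem_Ioi, mem_sphere_iff_norm, sub_zero, Prod.exists]
    constructor
    · intro hy
      have hy0 : ‖y‖ ≠ 0 := (hr.trans_lt hy).ne'
      refine ⟨‖y‖, ‖y‖⁻¹ • y, ⟨hy, ?_⟩, by rw [smul_smul, mul_inv_cancel₀ hy0, one_smul]⟩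
      rw [norm_smul, norm_inv, norm_norm, inv_mul_cancel₀ hy0]
    · rintro ⟨s, u, ⟨hs, hu⟩, rfl⟩
      rwa [norm_smul, hu, mul_one, Real.norm_of_nonneg (hr.trans hs.le)]
  rw [hpolar]
  exact (isPreconnected_Ioi.prod (isPreconnected_sphere hE 0 1)).image _
    (continuous_fst.smul continuous_snd).continuousOn

theorem eventually_cobounded_pos_of_isBounded_zeroSet [ProperSpace E]
    (hE : 1 < Module.rank ℝ E) {f : E → ℝ} (hf : Continuous f)
    (hzero : IsBounded {y | f y = 0}) (hbdd : ¬ BddAbove (range f)) :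
    ∀ᶠ y in cobounded E, 0 < f y := by
  obtain ⟨r, hr, hzero_sub⟩ := hzero.subset_closedBall_lt 0 0
  obtain ⟨z, hzS, hz⟩ : ∃ z ∈ (closedBall (0 : E) r)ᶜ, 0 < f z := by
    by_contra! h
    obtain ⟨M, hM⟩ := (isCompact_closedBall (0 : E) r).bddAbove_image hf.continuousOn
    refine hbdd ⟨max M 0, ?_⟩
    rintro - ⟨y, rfl⟩
    by_cases hy : y ∈ closedBall (0 : E) r
    · exact (hM (mem_image_of_mem f hy)).trans (le_max_left _ _)
    · exact (h y hy).trans (le_max_right _ _)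
  filter_upwards [isBounded_def.1 isBounded_closedBall] with y hy
  by_contra! hy0
  obtain ⟨w, hwS, hw0⟩ := (isPreconnected_compl_closedBall hE hr.le).intermediate_value hy hzS
    hf.continuousOn ⟨hy0, hz.le⟩
  exact hwS (hzero_sub hw0)

end Connected

namespace MvPolynomial

theorem polynomial_eval_aeval_C_mul_X {σ R : Type*} [CommRing R] (f : MvPolynomial σ R)
    (b : σ → R) (t : R) :
    (aeval (fun i => Polynomial.C (b i) * Polynomial.X) f).eval t = eval (t • b) f := by
  have hid : (Polynomial.evalRingHom t).comp (algebraMap R (Polynomial R)) = RingHom.id R := by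
    ext; simp
  rw [aeval_def, polynomial_eval_eval₂, hid]
  simp only [Polynomial.eval_mul, Polynomial.eval_C, Polynomial.eval_X, eval, coe_eval₂Hom]
  congr 1
  ext i
  exact mul_comm _ _

theorem not_isBounded_range_eval {σ : Type*} {f : MvPolynomial σ ℝ} (hf : f.totalDegree ≠ 0) :
    ¬ IsBounded (range fun x => eval x f) := by
  obtain ⟨b, hb⟩ : ∃ b : σ → ℝ, eval b f ≠ eval 0 f := by
    by_contra! h
    have hconst : f = C (eval 0 f) := MvPolynomial.funext fun x => by rw [eval_C, h x]
    exact hf (by rw [hconst, totalDegree_C])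
  set g := aeval (fun i => Polynomial.C (b i) * Polynomial.X) f
  have hg : ∀ t, g.eval t = eval (t • b) f := polynomial_eval_aeval_C_mul_X f b
  have hdeg : 0 < g.degree := by
    by_contra! h
    rw [← one_smul ℝ b, ← zero_smul ℝ b, ← hg, ← hg,
      Polynomial.eq_C_of_degree_le_zero h] at hb
    simp at hb
  intro hbdd
  obtain ⟨C, hC⟩ := hbdd.exists_norm_le
  obtain ⟨t, ht⟩ := ((Polynomial.abs_tendsto_atTop g hdeg).eventually_gt_atTop C).exists
  rw [hg] at ht
  exact ht.not_ge (hC _ ⟨_, rfl⟩)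

end MvPolynomial

theorem exists_mem_apply_ne_of_isOpen {ι X : Type*} [TopologicalSpace X]
    (j : ι) (c : X) [(𝓝[≠] c).NeBot] {U : Set (ι → X)} (hU : IsOpen U) (hne : U.Nonempty) :
    ∃ y ∈ U, y j ≠ c := by
  obtain ⟨y, hy, hyU⟩ :=
    ((dense_compl_singleton c).preimage (isOpenMap_eval j)).exists_mem_open hU hne
  exact ⟨y, hyU, hy⟩

section Newton

variable {n : ℕ}

theorem expR_mem_newton {f : MvPolynomial (Fin n) ℝ} {α : Fin n →₀ ℕ} (hα : α ∈ f.support) :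
    expR α ∈ Newton f :=
  subset_convexHull ℝ _ ⟨α, hα, rfl⟩

theorem dMin_le (q : Fin n → ℝ) {f : MvPolynomial (Fin n) ℝ} {α : Fin n →₀ ℕ}
    (hα : α ∈ f.support) : dMin q f ≤ ∑ i, q i * (α i : ℝ) := by
  have hbdd : BddBelow ((fun y : Fin n → ℝ => ∑ i, q i * y i) '' Newton f) :=
    ((f.support.finite_toSet.image expR).isCompact_convexHull ℝ).bddBelow_image (by fun_prop)
  exact csInf_le hbdd ⟨expR α, expR_mem_newton hα, rfl⟩

theorem expR_mem_face_iff (q : Fin n → ℝ) {f : MvPolynomial (Fin n) ℝ} {α : Fin n →₀ ℕ}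
    (hα : α ∈ f.support) : expR α ∈ face q f ↔ ∑ i, q i * (α i : ℝ) = dMin q f :=
  ⟨And.right, fun h => ⟨expR_mem_newton hα, h⟩⟩

open Classical in
theorem eval_trunc (f : MvPolynomial (Fin n) ℝ) (Δ : Set (Fin n → ℝ)) (x : Fin n → ℝ) :
    eval x (trunc f Δ) =
      ∑ α ∈ f.support.filter (fun α => expR α ∈ Δ), f.coeff α * ∏ i, x i ^ α i := by
  simp only [trunc, map_sum, eval_monomial, Finsupp.prod_pow]

end Newton

section MonomialCurve

variable {ι : Type*}

noncomputable def monomialCurve (x q : ι → ℝ) (t : ℝ) : ι → ℝ := fun i => x i * t ^ q i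

variable [Fintype ι]

theorem prod_monomialCurve_pow {t : ℝ} (ht : 0 < t) (x q : ι → ℝ) (α : ι → ℕ) :
    ∏ i, monomialCurve x q t i ^ α i = (∏ i, x i ^ α i) * t ^ ∑ i, q i * (α i : ℝ) := by
  rw [Real.rpow_sum_of_pos ht, ← Finset.prod_mul_distrib]
  refine Finset.prod_congr rfl fun i _ => ?_
  rw [monomialCurve, mul_pow, ← Real.rpow_natCast (t ^ q i), ← Real.rpow_mul ht.le]

theorem tendsto_monomialCurve_cobounded {x q : ι → ℝ} {j : ι} (hqj : q j < 0) (hxj : x j ≠ 0) :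
    Tendsto (monomialCurve x q) (𝓝[>] 0) (cobounded (ι → ℝ)) := by
  rw [← tendsto_norm_atTop_iff_cobounded]
  refine tendsto_atTop_mono' _ ?_
    ((tendsto_rpow_neg_nhdsGT_zero hqj).const_mul_atTop (abs_pos.2 hxj))
  filter_upwards [self_mem_nhdsWithin] with t (ht : 0 < t)
  calc |x j| * t ^ q j = ‖monomialCurve x q t j‖ := by
        rw [monomialCurve, Real.norm_eq_abs, abs_mul, abs_of_pos (Real.rpow_pos_of_pos ht _)]
    _ ≤ ‖monomialCurve x q t‖ := norm_le_pi_norm _ j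

end MonomialCurve

theorem tendsto_rpow_mul_eval_monomialCurve {n : ℕ} (f : MvPolynomial (Fin n) ℝ)
    (q x : Fin n → ℝ) :
    Tendsto (fun t => t ^ (-dMin q f) * eval (monomialCurve x q t) f) (𝓝[>] 0)
      (𝓝 (eval x (trunc f (face q f)))) := by
  classical
  set c : (Fin n →₀ ℕ) → ℝ := fun α => f.coeff α * ∏ i, x i ^ α i
  set e : (Fin n →₀ ℕ) → ℝ := fun α => ∑ i, q i * (α i : ℝ) - dMin q f
  have hcurve : ∀ t > 0,
      t ^ (-dMin q f) * eval (monomialCurve x q t) f = ∑ α ∈ f.support, c α * t ^ e α := by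
    intro t ht
    rw [eval_eq', Finset.mul_sum]
    refine Finset.sum_congr rfl fun α _ => ?_
    rw [prod_monomialCurve_pow ht, Real.rpow_sub ht, Real.rpow_neg ht.le]
    ring
  have hlim : eval x (trunc f (face q f)) = ∑ α ∈ f.support, c α * 0 ^ e α := by
    rw [eval_trunc, Finset.sum_filter]
    refine Finset.sum_congr rfl fun α hα => ?_
    by_cases hface : ∑ i, q i * (α i : ℝ) = dMin q f
    · rw [if_pos ((expR_mem_face_iff q hα).2 hface), show e α = 0 from sub_eq_zero.2 hface,
        Real.rpow_zero, mul_one]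
    · rw [if_neg (mt (expR_mem_face_iff q hα).1 hface),
        Real.zero_rpow (sub_ne_zero.2 hface), mul_zero]
  rw [hlim]
  refine Tendsto.congr' (f₁ := fun t => ∑ α ∈ f.support, c α * t ^ e α) ?_
    (tendsto_finsetSum _ fun α hα => ?_)
  · filter_upwards [self_mem_nhdsWithin] with t ht using (hcurve t ht).symm
  · have he : 0 ≤ e α := sub_nonneg.2 (dMin_le q hα)
    exact ((Real.continuousAt_rpow_const 0 _ (Or.inr he)).tendsto.mono_left
      nhdsWithin_le_nhds).const_mul (c α)

theorem stmt3 {n : ℕ} (hn : 2 ≤ n) (f : MvPolynomial (Fin n) ℝ) (hf : f.totalDegree ≠ 0)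
    (hc : IsCompact {x : Fin n → ℝ | eval x f = 0})
    (hb : ∃ m : ℝ, ∀ x : Fin n → ℝ, m ≤ eval x f) :
    ∀ q : Fin n → ℝ, (∃ j, q j < 0) → ∀ x : Fin n → ℝ, 0 ≤ eval x (trunc f (face q f)) := by
  rintro q ⟨j, hqj⟩ x
  by_contra! hx
  have hbdd : ¬ BddAbove (range fun y => eval y f) := by
    obtain ⟨m, hm⟩ := hb
    exact fun h => not_isBounded_range_eval hf
      (isBounded_iff_bddBelow_bddAbove.2 ⟨⟨m, by rintro - ⟨y, rfl⟩; exact hm y⟩, h⟩)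
  have hpos : ∀ᶠ y in cobounded (Fin n → ℝ), 0 < eval y f :=
    eventually_cobounded_pos_of_isBounded_zeroSet (by rw [rank_fin_fun]; exact_mod_cast hn)
      (continuous_eval f) hc.isBounded hbdd
  obtain ⟨x₀, hx₀, hx₀j⟩ := exists_mem_apply_ne_of_isOpen j 0
    (isOpen_lt (continuous_eval _) continuous_const) ⟨x, hx⟩
  have hneg : ∀ᶠ t in 𝓝[>] 0, t ^ (-dMin q f) * eval (monomialCurve x₀ q t) f < 0 :=
    (tendsto_rpow_mul_eval_monomialCurve f q x₀).eventually_lt_const hx₀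
  obtain ⟨t, ht, hfar, hnear⟩ := (eventually_mem_nhdsWithin.and
    (((tendsto_monomialCurve_cobounded hqj hx₀j).eventually hpos).and hneg)).exists
  exact (mul_pos (Real.rpow_pos_of_pos ht _) hfar).not_gt hnear
end

section
/- Let f : ℝⁿ → ℝ be a polynomial with n ≥ 2. Suppose (i) f restricted to every coordinate subspace ℝ^J, J ⊆ {1,…,n}, is not identically zero, and (ii) for every face Δ in the Newton boundary at infinity Γ_∞(f), the face polynomial f_Δ is strictly positive on (ℝ\{0})ⁿ. Then the zero set Z(f) is compact. -/
open MvPolynomial Set Asymptotics Filter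

/-!
If `Z(f)` were unbounded, pick zeros `x k` with `‖x k‖ → ∞` and pass to an ultrafilter, which
plays the role of the curve selection lemma. Along it each coordinate has an eventual sign `σ i`,
the eventually nonzero coordinates form a set `J`, and `f (x k)` is the exponential sum
`∑ c_α σ^α exp ⟨log |x k|, α⟩` over the exponents supported on `J` (there is one, `0`, because
`f 0 ≠ 0`). Compared with a dominant term, the terms that do not die out form a set `T`, and in
the limit `∑_{α ∈ T} c_α σ^α exp ⟨z, α⟩ = 0` for some `z`. Since `⟨log |x k|, α - α₀⟩` converges
on `T` and tends to `-∞` off `T`, moving `log |x k|` into the subspace where `T` is flat by a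
bounded correction yields a direction `q`, negative in a coordinate along which `x k` escapes,
whose face meets the exponents of `f` exactly in `T`. Then `σ * exp z` is a zero of `f_Δ` with
nonzero coordinates, contradicting positivity.
-/

open Topology

theorem LinearMap.exists_comp_comp_self_eq {K V W : Type*} [DivisionRing K] [AddCommGroup V]
    [Module K V] [AddCommGroup W] [Module K W] (L : V →ₗ[K] W) :
    ∃ g : W →ₗ[K] V, L ∘ₗ g ∘ₗ L = L := by
  obtain ⟨s, hs⟩ := L.rangeRestrict.exists_rightInverse_of_surjective L.range_rangeRestrict
  obtain ⟨g, hg⟩ := LinearMap.exists_extend s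
  refine ⟨g, LinearMap.ext fun v => ?_⟩
  have hgv : g (L v) = s (L.rangeRestrict v) := LinearMap.congr_fun hg (L.rangeRestrict v)
  simpa [hgv] using congr_arg Subtype.val (LinearMap.congr_fun hs (L.rangeRestrict v))

section FiniteDimensional

variable {E F : Type*} [NormedAddCommGroup E] [NormedSpace ℝ E] [FiniteDimensional ℝ E]
  [NormedAddCommGroup F] [NormedSpace ℝ F] [FiniteDimensional ℝ F]
  {κ : Type*} {l : Filter κ} [l.NeBot]

theorem LinearMap.exists_tendsto_sub_of_tendsto (L : E →ₗ[ℝ] F) {u : κ → E} {y : F}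
    (hu : Tendsto (fun k => L (u k)) l (𝓝 y)) :
    ∃ z, L z = y ∧ ∃ v : κ → E, (∀ k, L (v k) = 0) ∧ Tendsto (fun k => u k - v k) l (𝓝 z) := by
  obtain ⟨g, hg⟩ := L.exists_comp_comp_self_eq
  have hLg : ∀ w, L (g (L w)) = L w := LinearMap.congr_fun hg
  obtain ⟨x, rfl⟩ : y ∈ LinearMap.range L :=
    (LinearMap.range L).closed_of_finiteDimensional.mem_of_tendsto hu
      (Eventually.of_forall fun k => ⟨u k, rfl⟩)
  refine ⟨g (L x), hLg x, fun k => u k - g (L (u k)), fun k => by simp [hLg], ?_⟩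
  exact ((g.continuous_of_finiteDimensional.tendsto _).comp hu).congr fun k =>
    (sub_sub_cancel _ _).symm

theorem exists_sign_pattern_of_tendsto {ι : Type*} (ℓ : ι → E →ₗ[ℝ] ℝ) (φ : E →ₗ[ℝ] ℝ)
    (T B : Finset ι) (c : ι → ℝ) {u : κ → E}
    (hT : ∀ α ∈ T, Tendsto (fun k => ℓ α (u k)) l (𝓝 (c α)))
    (hB : ∀ β ∈ B, Tendsto (fun k => ℓ β (u k)) l atBot)
    (hφ : Tendsto (fun k => φ (u k)) l atTop) :
    ∃ v z, (∀ α ∈ T, ℓ α v = 0 ∧ ℓ α z = c α) ∧ (∀ β ∈ B, ℓ β v < 0) ∧ 0 < φ v := by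
  let L : E →ₗ[ℝ] (T → ℝ) := LinearMap.pi fun α => ℓ α
  obtain ⟨z, hz, v, hv, hlim⟩ := L.exists_tendsto_sub_of_tendsto (y := fun α => c α)
    (tendsto_pi_nhds.mpr fun α => hT α α.2)
  have hcont : ∀ m : E →ₗ[ℝ] ℝ, Tendsto (fun k => m (u k - v k)) l (𝓝 (m z)) := fun m =>
    (m.continuous_of_finiteDimensional.tendsto z).comp hlim
  have hvB : ∀ β ∈ B, ∀ᶠ k in l, ℓ β (v k) < 0 := fun β hβ => by
    have := (hB β hβ).atBot_add (hcont (ℓ β)).neg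
    simpa using this.eventually_lt_atBot 0
  have hvφ : ∀ᶠ k in l, 0 < φ (v k) := by
    have := (hφ.atTop_add (hcont φ).neg)
    simpa using this.eventually_gt_atTop 0
  obtain ⟨k, hkB, hkφ⟩ := ((eventually_all_finset B).mpr hvB |>.and hvφ).exists
  refine ⟨v k, z, fun α hα => ⟨congr_fun (hv k) ⟨α, hα⟩, congr_fun hz ⟨α, hα⟩⟩, hkB, hkφ⟩

end FiniteDimensional

namespace Ultrafilter

variable {κ : Type*} (𝒰 : Ultrafilter κ)

theorem eventually_forall_iff_eventually {ι : Type*} [Finite ι] (p : κ → ι → Prop) :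
    ∀ᶠ k in 𝒰, ∀ i, p k i ↔ ∀ᶠ k' in 𝒰, p k' i := by
  refine eventually_all.mpr fun i => ?_
  by_cases h : ∀ᶠ k in 𝒰, p k i
  · exact h.mono fun k hk => iff_of_true hk h
  · exact (eventually_not.mpr h).mono fun k hk => iff_of_false hk h

theorem tendsto_nhds_or_atBot {b : κ → ℝ} {M : ℝ} (hb : ∀ᶠ k in 𝒰, b k ≤ M) :
    (∃ c, Tendsto b 𝒰 (𝓝 c)) ∨ Tendsto b 𝒰 atBot := by
  by_cases h : Tendsto b 𝒰 atBot
  · exact Or.inr h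
  obtain ⟨C, hC⟩ := not_forall.mp (mt tendsto_atBot.mpr h)
  have hIcc : ∀ᶠ k in 𝒰, b k ∈ Set.Icc C M :=
    ((eventually_not.mpr hC).and hb).mono fun k hk => ⟨(not_le.mp hk.1).le, hk.2⟩
  obtain ⟨c, -, hc⟩ := isCompact_Icc.ultrafilter_le_nhds' (𝒰.map b) hIcc
  exact Or.inl ⟨c, hc⟩

theorem exists_eventually_forall_le {ι : Type*} (S : Finset ι) (hS : S.Nonempty)
    (a : κ → ι → ℝ) : ∃ α₀ ∈ S, ∀ᶠ k in 𝒰, ∀ α ∈ S, a k α ≤ a k α₀ :=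
  (eventually_exists_mem_iff S.finite_toSet).mp <|
    Eventually.of_forall fun k => S.exists_max_image (a k) hS

theorem exists_tendsto_sub_nhds_or_atBot {ι : Type*} (S : Finset ι) (hS : S.Nonempty)
    (a : κ → ι → ℝ) : ∃ T ⊆ S, ∃ α₀ ∈ T, ∃ c : ι → ℝ,
      (∀ α ∈ T, Tendsto (fun k => a k α - a k α₀) 𝒰 (𝓝 (c α))) ∧
      ∀ β ∈ S, β ∉ T → Tendsto (fun k => a k β - a k α₀) 𝒰 atBot := by
  classical
  obtain ⟨α₀, hα₀, hmax⟩ := 𝒰.exists_eventually_forall_le S hS a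
  have hdich : ∀ α ∈ S, (∃ c, Tendsto (fun k => a k α - a k α₀) 𝒰 (𝓝 c)) ∨
      Tendsto (fun k => a k α - a k α₀) 𝒰 atBot := fun α hα =>
    𝒰.tendsto_nhds_or_atBot (M := 0) (hmax.mono fun k hk => sub_nonpos.mpr (hk α hα))
  choose! c hc using fun α (h : ∃ c, Tendsto (fun k => a k α - a k α₀) 𝒰 (𝓝 c)) => h
  refine ⟨S.filter fun α => ∃ c, Tendsto (fun k => a k α - a k α₀) 𝒰 (𝓝 c),
    Finset.filter_subset _ _, α₀, Finset.mem_filter.mpr ⟨hα₀, 0, by simp⟩, c,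
    fun α hα => hc α (Finset.mem_filter.mp hα).2, fun β hβS hβT => ?_⟩
  exact (hdich β hβS).resolve_left fun h => hβT (Finset.mem_filter.mpr ⟨hβS, h⟩)

theorem exists_tendsto_abs_atTop {ι : Type*} [Fintype ι] {x : κ → ι → ℝ}
    (hx : Tendsto (fun k => ‖x k‖) 𝒰 atTop) : ∃ i, Tendsto (fun k => |x k i|) 𝒰 atTop := by
  have hmax : ∀ᶠ k in 𝒰, ∃ i, ‖x k‖ ≤ |x k i| :=
    (hx.eventually_gt_atTop 0).mono fun k hk => by
      by_contra! h
      exact lt_irrefl _ ((pi_norm_lt_iff hk).mpr h)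
  obtain ⟨i, hi⟩ := eventually_exists_iff.mp hmax
  exact ⟨i, tendsto_atTop_mono' _ hi hx⟩

end Ultrafilter

theorem sum_mul_exp_eq_zero_of_tendsto {κ ι : Type*} {l : Filter κ} [l.NeBot] {S T : Finset ι}
    (hTS : T ⊆ S) (b : ι → ℝ) {a : κ → ι → ℝ} {r : κ → ℝ} {c : ι → ℝ}
    (hT : ∀ α ∈ T, Tendsto (fun k => a k α - r k) l (𝓝 (c α)))
    (hB : ∀ β ∈ S, β ∉ T → Tendsto (fun k => a k β - r k) l atBot)
    (h : ∀ᶠ k in l, ∑ α ∈ S, b α * Real.exp (a k α) = 0) :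
    ∑ α ∈ T, b α * Real.exp (c α) = 0 := by
  classical
  have hlim : Tendsto (fun k => ∑ α ∈ S, b α * Real.exp (a k α - r k)) l
      (𝓝 (∑ α ∈ S, if α ∈ T then b α * Real.exp (c α) else 0)) := by
    refine tendsto_finsetSum _ fun α hα => ?_
    split_ifs with hαT
    · exact tendsto_const_nhds.mul ((Real.continuous_exp.tendsto _).comp (hT α hαT))
    · simpa using tendsto_const_nhds.mul (Real.tendsto_exp_atBot.comp (hB α hα hαT))
  have hzero : ∀ᶠ k in l, ∑ α ∈ S, b α * Real.exp (a k α - r k) = 0 :=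
    h.mono fun k hk => by
      simp_rw [Real.exp_sub, mul_div_assoc', ← Finset.sum_div, hk, zero_div]
  rw [← Finset.inter_eq_right.mpr hTS, ← Finset.sum_ite_mem]
  exact tendsto_nhds_unique (hlim.congr' hzero) tendsto_const_nhds

theorem Ultrafilter.exists_exposed_sum_mul_exp_eq_zero {E : Type*} [NormedAddCommGroup E]
    [NormedSpace ℝ E] [FiniteDimensional ℝ E] {κ ι : Type*} (𝒰 : Ultrafilter κ)
    (ℓ : ι → E →ₗ[ℝ] ℝ) (φ : E →ₗ[ℝ] ℝ) {S : Finset ι} (hS : S.Nonempty) (b : ι → ℝ)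
    {u : κ → E} (hφ : Tendsto (fun k => φ (u k)) 𝒰 atTop)
    (h : ∀ᶠ k in 𝒰, ∑ α ∈ S, b α * Real.exp (ℓ α (u k)) = 0) :
    ∃ T ⊆ S, ∃ α₀ ∈ T, ∃ v z : E, (∀ α ∈ T, ℓ α v = ℓ α₀ v) ∧
      (∀ β ∈ S, β ∉ T → ℓ β v < ℓ α₀ v) ∧ 0 < φ v ∧ ∑ α ∈ T, b α * Real.exp (ℓ α z) = 0 := by
  classical
  obtain ⟨T, hTS, α₀, hα₀T, c, hT, hB⟩ :=
    𝒰.exists_tendsto_sub_nhds_or_atBot S hS fun k α => ℓ α (u k)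
  have hc : ∑ α ∈ T, b α * Real.exp (c α) = 0 := sum_mul_exp_eq_zero_of_tendsto hTS b hT hB h
  obtain ⟨v, z, hTvz, hBv, hφv⟩ := exists_sign_pattern_of_tendsto (fun α => ℓ α - ℓ α₀) φ T
    (S.filter (· ∉ T)) c (u := u) (by simpa using hT)
    (fun β hβ => by simpa using hB β (Finset.mem_filter.mp hβ).1 (Finset.mem_filter.mp hβ).2) hφ
  refine ⟨T, hTS, α₀, hα₀T, v, z, fun α hα => sub_eq_zero.mp (hTvz α hα).1,
    fun β hβ hβT => sub_neg.mp (hBv β (Finset.mem_filter.mpr ⟨hβ, hβT⟩)), hφv, ?_⟩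
  calc ∑ α ∈ T, b α * Real.exp (ℓ α z)
      = Real.exp (ℓ α₀ z) * ∑ α ∈ T, b α * Real.exp (c α) := by
        rw [Finset.mul_sum]
        refine Finset.sum_congr rfl fun α hα => ?_
        rw [← (hTvz α hα).2, LinearMap.sub_apply, Real.exp_sub]
        field_simp
    _ = 0 := by rw [hc, mul_zero]

noncomputable def pairing {n : ℕ} (α : Fin n →₀ ℕ) : (Fin n → ℝ) →ₗ[ℝ] ℝ :=
  Fintype.linearCombination ℝ (expR α)

theorem pairing_apply {n : ℕ} (α : Fin n →₀ ℕ) (q : Fin n → ℝ) :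
    pairing α q = ∑ i, q i * expR α i := rfl

theorem prod_mul_exp_pow {n : ℕ} (σ z : Fin n → ℝ) (α : Fin n →₀ ℕ) :
    ∏ i, (σ i * Real.exp (z i)) ^ α i = (∏ i, σ i ^ α i) * Real.exp (pairing α z) := by
  simp_rw [mul_pow, Finset.prod_mul_distrib, ← Real.exp_nat_mul, ← Real.exp_sum, pairing_apply,
    expR, mul_comm]

-- `Real.log 0 = 0` is harmless here: the exponents in the sum vanish wherever `x` does.
theorem eval_eq_sum_mul_exp_pairing {n : ℕ} (f : MvPolynomial (Fin n) ℝ) {x σ : Fin n → ℝ}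
    (hσ : ∀ i, x i = σ i * |x i|) :
    eval x f = ∑ α ∈ f.support.filter (fun α => ∀ i, x i = 0 → α i = 0),
      (coeff α f * ∏ i, σ i ^ α i) * Real.exp (pairing α fun i => Real.log |x i|) := by
  rw [eval_eq', ← Finset.sum_filter_of_ne (p := fun α => ∀ i, x i = 0 → α i = 0)]
  · refine Finset.sum_congr rfl fun α hα => ?_
    have hx : ∏ i, x i ^ α i = ∏ i, (σ i * Real.exp (Real.log |x i|)) ^ α i :=
      Finset.prod_congr rfl fun i _ => by
        by_cases hxi : x i = 0
        · simp [(Finset.mem_filter.mp hα).2 i hxi]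
        · rw [Real.exp_log (abs_pos.mpr hxi), ← hσ]
    rw [hx, prod_mul_exp_pow, mul_assoc]
  · intro α _ hα i hxi
    by_contra hαi
    exact hα (by rw [Finset.prod_eq_zero (Finset.mem_univ i) (by rw [hxi, zero_pow hαi]), mul_zero])

theorem eval_sum_monomial_mul_exp {n : ℕ} (T : Finset (Fin n →₀ ℕ)) (b : (Fin n →₀ ℕ) → ℝ)
    (σ z : Fin n → ℝ) :
    eval (fun i => σ i * Real.exp (z i)) (∑ α ∈ T, monomial α (b α)) =
      ∑ α ∈ T, (b α * ∏ i, σ i ^ α i) * Real.exp (pairing α z) := by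
  simp [eval_monomial, Finsupp.prod_pow, prod_mul_exp_pow, mul_assoc]

theorem trunc_face_eq_sum {n : ℕ} (f : MvPolynomial (Fin n) ℝ) (q : Fin n → ℝ)
    {T : Finset (Fin n →₀ ℕ)} (hT : T ⊆ f.support) {α₀ : Fin n →₀ ℕ} (hα₀ : α₀ ∈ T)
    (hTq : ∀ α ∈ T, pairing α q = pairing α₀ q)
    (hq : ∀ β ∈ f.support, β ∉ T → pairing α₀ q < pairing β q) :
    trunc f (face q f) = ∑ α ∈ T, monomial α (coeff α f) := by
  classical
  have hN : ∀ α ∈ f.support, expR α ∈ Newton f := fun α hα =>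
    subset_convexHull ℝ _ ⟨α, hα, rfl⟩
  have hle : ∀ α ∈ f.support, pairing α₀ q ≤ pairing α q := fun α hα => by
    by_cases hαT : α ∈ T
    · exact (hTq α hαT).ge
    · exact (hq α hα hαT).le
  have hlin : IsLinearMap ℝ fun ξ : Fin n → ℝ => ∑ i, q i * ξ i :=
    ⟨fun a b => by simp [mul_add, Finset.sum_add_distrib],
      fun c a => by simp [Finset.mul_sum, mul_left_comm]⟩
  have hd : dMin q f = pairing α₀ q := by
    refine IsLeast.csInf_eq ⟨⟨expR α₀, hN α₀ (hT hα₀), rfl⟩, ?_⟩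
    rintro _ ⟨ξ, hξ, rfl⟩
    refine convexHull_min ?_ (convex_halfSpace_ge hlin _) hξ
    rintro _ ⟨α, hα, rfl⟩
    exact hle α hα
  have hfilter : f.support.filter (fun α => expR α ∈ face q f) = T := by
    ext α
    simp only [Finset.mem_filter, face, Set.mem_sep_iff, hd]
    refine ⟨?_, fun hαT => ⟨hT hαT, hN α (hT hαT), hTq α hαT⟩⟩
    rintro ⟨hα, -, hαq⟩
    by_contra hαT
    exact (hq α hα hαT).ne' hαq
  unfold trunc
  rw [hfilter]

/-- Adding a large multiple of the indicator of the complement of `J` pushes every exponent not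
supported on `J` off the face. -/
theorem exists_trunc_face_eq_sum {n : ℕ} (f : MvPolynomial (Fin n) ℝ) (J : Finset (Fin n))
    {T : Finset (Fin n →₀ ℕ)} (hT : T ⊆ f.support.filter fun α => ∀ i ∉ J, α i = 0)
    {α₀ : Fin n →₀ ℕ} (hα₀ : α₀ ∈ T) (v : Fin n → ℝ)
    (hTv : ∀ α ∈ T, pairing α v = pairing α₀ v)
    (hSv : ∀ β ∈ f.support.filter (fun α => ∀ i ∉ J, α i = 0), β ∉ T →
      pairing β v < pairing α₀ v) :
    ∃ q : Fin n → ℝ, (∀ i ∈ J, q i = -v i) ∧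
      trunc f (face q f) = ∑ α ∈ T, monomial α (coeff α f) := by
  classical
  set S := f.support.filter fun α => ∀ i ∉ J, α i = 0
  let e : Fin n → ℝ := fun i => if i ∈ J then 0 else 1
  have hSe : ∀ α ∈ S, pairing α e = 0 := fun α hα => by
    refine (pairing_apply α e).trans (Finset.sum_eq_zero fun i _ => ?_)
    by_cases hi : i ∈ J
    · simp [e, hi]
    · simp [expR, (Finset.mem_filter.mp hα).2 i hi]
  have hfar : ∀ β ∈ f.support \ S, ∀ᶠ t : ℝ in atTop, -pairing α₀ v < pairing β (t • e - v) := by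
    intro β hβ
    obtain ⟨i, hiJ, hβi⟩ : ∃ i ∉ J, β i ≠ 0 := by
      simpa [S, (Finset.mem_sdiff.mp hβ).1] using (Finset.mem_sdiff.mp hβ).2
    have he : 0 < pairing β e := by
      rw [pairing_apply]
      refine lt_of_lt_of_le ?_ (Finset.single_le_sum (fun j _ => mul_nonneg ?_ (Nat.cast_nonneg _))
        (Finset.mem_univ i))
      · simp [e, hiJ, Nat.pos_of_ne_zero hβi]
      · by_cases hj : j ∈ J <;> simp [e, hj]
    have : Tendsto (fun t : ℝ => t * pairing β e + -pairing β v) atTop atTop :=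
      tendsto_atTop_add_const_right _ _ (tendsto_id.atTop_mul_const he)
    simpa [map_sub, map_smul, sub_eq_add_neg] using this.eventually_gt_atTop (-pairing α₀ v)
  obtain ⟨t, ht⟩ := ((eventually_all_finset _).mpr hfar).exists
  have hS : ∀ α ∈ S, pairing α (t • e - v) = -pairing α v := fun α hα => by
    simp [hSe α hα]
  refine ⟨t • e - v, fun i hi => by simp [e, hi], trunc_face_eq_sum f _
    (fun α hα => (Finset.mem_filter.mp (hT hα)).1) hα₀ (fun α hα => ?_) fun β hβ hβT => ?_⟩
  · rw [hS α (hT hα), hS α₀ (hT hα₀), hTv α hα]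
  · rw [hS α₀ (hT hα₀)]
    by_cases hβS : β ∈ S
    · rw [hS β hβS]; exact neg_lt_neg (hSv β hβS hβT)
    · exact ht β (Finset.mem_sdiff.mpr ⟨hβ, hβS⟩)

theorem exists_trunc_eval_eq_zero_of_tendsto {n : ℕ} {κ : Type*} (f : MvPolynomial (Fin n) ℝ)
    (h0 : 0 ∈ f.support) (𝒰 : Ultrafilter κ) {x : κ → Fin n → ℝ}
    (hx : ∀ᶠ k in 𝒰, eval (x k) f = 0) (hnorm : Tendsto (fun k => ‖x k‖) 𝒰 atTop) :
    ∃ Δ ∈ NewtonBoundary f, ∃ y : Fin n → ℝ, (∀ i, y i ≠ 0) ∧ eval y (trunc f Δ) = 0 := by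
  classical
  let J : Finset (Fin n) := Finset.univ.filter fun i => ∀ᶠ k in 𝒰, x k i ≠ 0
  let σ : Fin n → ℝ := fun i => if ∀ᶠ k in 𝒰, x k i < 0 then -1 else 1
  let S := f.support.filter fun α => ∀ i ∉ J, α i = 0
  have hσ : ∀ᶠ k in 𝒰, ∀ i, x k i = σ i * |x k i| :=
    (𝒰.eventually_forall_iff_eventually fun k i => x k i < 0).mono fun k hk i => by
      by_cases hneg : x k i < 0
      · simp [σ, (hk i).mp hneg, abs_of_neg hneg]
      · simp [σ, mt (hk i).mpr hneg, abs_of_nonneg (not_lt.mp hneg)]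
  have hsum : ∀ᶠ k in 𝒰, ∑ α ∈ S, (coeff α f * ∏ i, σ i ^ α i) *
      Real.exp (pairing α fun i => Real.log |x k i|) = 0 := by
    filter_upwards [hx, hσ, 𝒰.eventually_forall_iff_eventually fun k i => x k i ≠ 0]
      with k hk hkσ hkJ
    rw [← hk, eval_eq_sum_mul_exp_pairing f hkσ]
    refine Finset.sum_congr (Finset.filter_congr fun α _ => ?_) fun _ _ => rfl
    simp only [J, Finset.mem_filter, Finset.mem_univ, true_and, ← hkJ, not_not]
  obtain ⟨i₀, hi₀⟩ := 𝒰.exists_tendsto_abs_atTop hnorm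
  have hi₀J : i₀ ∈ J := Finset.mem_filter.mpr ⟨Finset.mem_univ _,
    (hi₀.eventually_gt_atTop 0).mono fun k hk => abs_pos.mp hk⟩
  obtain ⟨T, hTS, α₀, hα₀, v, z, hTv, hSv, hv, hz⟩ := 𝒰.exists_exposed_sum_mul_exp_eq_zero
    pairing (LinearMap.proj i₀) ⟨0, by simp [S, h0]⟩ _ (Real.tendsto_log_atTop.comp hi₀) hsum
  obtain ⟨q, hqJ, hq⟩ := exists_trunc_face_eq_sum f J hTS hα₀ v hTv hSv
  refine ⟨face q f, ⟨q, ⟨i₀, by rw [hqJ i₀ hi₀J]; exact neg_neg_of_pos hv⟩, rfl⟩,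
    fun i => σ i * Real.exp (z i),
    fun i => mul_ne_zero (by simp only [σ]; split_ifs <;> norm_num) (Real.exp_ne_zero _), ?_⟩
  rw [hq, eval_sum_monomial_mul_exp]
  exact hz

theorem stmt4_general {n : ℕ} (f : MvPolynomial (Fin n) ℝ)
    (hJ : ∀ J : Set (Fin n), ∃ x : Fin n → ℝ, (∀ j ∉ J, x j = 0) ∧ eval x f ≠ 0)
    (hpos : ∀ Δ ∈ NewtonBoundary f, ∀ x : Fin n → ℝ, (∀ i, x i ≠ 0) →
      0 < eval x (trunc f Δ)) :
    IsCompact {x : Fin n → ℝ | eval x f = 0} := by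
  rw [Metric.isCompact_iff_isClosed_bounded]
  refine ⟨isClosed_eq (continuous_eval f) continuous_const, ?_⟩
  by_contra hunbdd
  have h0 : 0 ∈ f.support := by
    obtain ⟨x, hx, hfx⟩ := hJ ∅
    rw [show x = 0 from funext fun j => hx j (Set.notMem_empty j), eval_zero] at hfx
    exact mem_support_iff.mpr hfx
  have hfar : ∀ k : ℕ, ∃ x : Fin n → ℝ, eval x f = 0 ∧ (k : ℝ) < ‖x‖ := fun k => by
    by_contra! h
    exact hunbdd (isBounded_iff_forall_norm_le.mpr ⟨k, h⟩)
  choose x hx hxk using hfar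
  have hnorm : Tendsto (fun k => ‖x k‖) (Ultrafilter.of (atTop : Filter ℕ)) atTop :=
    tendsto_atTop_mono (fun k => (hxk k).le)
      (tendsto_natCast_atTop_atTop.mono_left (Ultrafilter.of_le _))
  obtain ⟨Δ, hΔ, y, hy, hy0⟩ :=
    exists_trunc_eval_eq_zero_of_tendsto f h0 _ (Eventually.of_forall hx) hnorm
  exact (hpos Δ hΔ y hy).ne' hy0

theorem stmt4 {n : ℕ} (hn : 2 ≤ n) (f : MvPolynomial (Fin n) ℝ)
    (hJ : ∀ J : Set (Fin n), ∃ x : Fin n → ℝ, (∀ j ∉ J, x j = 0) ∧ eval x f ≠ 0)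
    (hpos : ∀ Δ ∈ NewtonBoundary f, ∀ x : Fin n → ℝ, (∀ i, x i ≠ 0) →
      0 < eval x (trunc f Δ)) :
    IsCompact {x : Fin n → ℝ | eval x f = 0} :=
  stmt4_general f hJ hpos
end

section
/- Let f : ℝⁿ → ℝ be a nonconstant polynomial, let V be the set of vertices of its Newton polyhedron Γ(f), and define 𝒫(x) = Σ_{α ∈ Γ(f) ∩ ℤ₊ⁿ} |x^α| and 𝒫̃(x) = Σ_{v ∈ V} |x^v|. Then there exist positive constants c₁, c₂ such that c₁𝒫(x) ≤ 𝒫̃(x) ≤ c₂𝒫(x) for all x ∈ ℝⁿ. -/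
open MvPolynomial Set Asymptotics Filter

/-- `𝒫̃(x) = Σ_{v vertex of Γ(f)} |x^v|`. -/
noncomputable def Ptilde {n : ℕ} (f : MvPolynomial (Fin n) ℝ) (x : Fin n → ℝ) : ℝ :=
  ∑' α : {α : Fin n →₀ ℕ // expR α ∈ Set.extremePoints ℝ (Newton f)},
    |∏ i, x i ^ ((α : Fin n →₀ ℕ) i)|

/-!
Every lattice point `α` of `Γ(f)` lies in the convex hull of the vertices. On the nonnegative
orthant `v ↦ ∏ |xᵢ| ^ vᵢ` is convex (weighted AM-GM), so by the maximum principle `|x^α|` is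
bounded by `|x^v|` for some vertex `v`. Hence `𝒫 ≤ #(Γ(f) ∩ ℤ₊ⁿ) · 𝒫̃`, while `𝒫̃ ≤ 𝒫` because
the vertices are among the lattice points.
-/

lemma convexOn_prod_rpow {ι : Type*} [Fintype ι] {y : ι → ℝ} (hy : 0 ≤ y) :
    ConvexOn ℝ (Ici 0) fun v : ι → ℝ => ∏ i, y i ^ v i := by
  refine ⟨convex_Ici 0, fun v hv w hw a b ha hb hab => ?_⟩
  have hv : ∀ i, 0 ≤ v i := hv
  have hw : ∀ i, 0 ≤ w i := hw
  have hyv : 0 ≤ ∏ i, y i ^ v i := Finset.prod_nonneg fun i _ => Real.rpow_nonneg (hy i) _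
  have hyw : 0 ≤ ∏ i, y i ^ w i := Finset.prod_nonneg fun i _ => Real.rpow_nonneg (hy i) _
  calc ∏ i, y i ^ (a • v + b • w) i
      = (∏ i, y i ^ v i) ^ a * (∏ i, y i ^ w i) ^ b := by
        rw [← Real.finsetProd_rpow _ _ fun i _ => Real.rpow_nonneg (hy i) _,
          ← Real.finsetProd_rpow _ _ fun i _ => Real.rpow_nonneg (hy i) _,
          ← Finset.prod_mul_distrib]
        refine Finset.prod_congr rfl fun i _ => ?_
        simp only [Pi.add_apply, Pi.smul_apply, smul_eq_mul]
        rw [Real.rpow_add_of_nonneg (hy i) (mul_nonneg ha (hv i)) (mul_nonneg hb (hw i)),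
          mul_comm a, mul_comm b, Real.rpow_mul (hy i), Real.rpow_mul (hy i)]
    _ ≤ a • ∏ i, y i ^ v i + b • ∏ i, y i ^ w i :=
        Real.geom_mean_le_arith_mean2_weighted ha hb hyv hyw hab

lemma abs_prod_pow_eq_prod_rpow_expR {n : ℕ} (x : Fin n → ℝ) (α : Fin n →₀ ℕ) :
    |∏ i, x i ^ α i| = ∏ i, |x i| ^ expR α i := by
  simp only [Finset.abs_prod, abs_pow, expR, Real.rpow_natCast]

lemma expR_nonneg {n : ℕ} (α : Fin n →₀ ℕ) : 0 ≤ expR α := fun i => Nat.cast_nonneg (α i)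

lemma finite_setOf_expR_mem {n : ℕ} {K : Set (Fin n → ℝ)} (hK : Bornology.IsBounded K) :
    {α : Fin n →₀ ℕ | expR α ∈ K}.Finite := by
  obtain ⟨R, hR⟩ := hK.subset_closedBall 0
  refine (Set.finite_Iic (Finsupp.equivFunOnFinite.symm fun _ => ⌈R⌉₊)).subset fun α hα i => ?_
  have : (α i : ℝ) ≤ R := calc
    (α i : ℝ) ≤ ‖expR α‖ := (Real.le_norm_self _).trans (norm_le_pi_norm (expR α) i)
    _ ≤ R := mem_closedBall_zero_iff.mp (hR hα)
  simpa using (Nat.cast_le (α := ℝ)).mp (this.trans (Nat.le_ceil R))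

section Newton

variable {n : ℕ} (f : MvPolynomial (Fin n) ℝ)

lemma finite_expR_image_support : (expR '' (f.support : Set (Fin n →₀ ℕ))).Finite :=
  f.support.finite_toSet.image expR

lemma isCompact_newton : IsCompact (Newton f) :=
  (finite_expR_image_support f).isCompact_convexHull ℝ

lemma extremePoints_newton_subset :
    extremePoints ℝ (Newton f) ⊆ expR '' (f.support : Set (Fin n →₀ ℕ)) :=
  extremePoints_convexHull_subset

lemma convexHull_extremePoints_newton : convexHull ℝ (extremePoints ℝ (Newton f)) = Newton f := by
  have hfin := (finite_expR_image_support f).subset (extremePoints_newton_subset f)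
  simpa only [(hfin.isClosed_convexHull ℝ).closure_eq] using
    closure_convexHull_extremePoints (isCompact_newton f) (convex_convexHull ℝ _)

lemma finite_setOf_expR_mem_newton : {α : Fin n →₀ ℕ | expR α ∈ Newton f}.Finite :=
  finite_setOf_expR_mem (isCompact_newton f).isBounded

lemma setOf_expR_mem_extremePoints_newton_subset :
    {α : Fin n →₀ ℕ | expR α ∈ extremePoints ℝ (Newton f)} ⊆ {α | expR α ∈ Newton f} :=
  preimage_mono extremePoints_subset

lemma abs_prod_pow_le_Ptilde_of_mem_extremePoints (x : Fin n → ℝ) {β : Fin n →₀ ℕ}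
    (hβ : expR β ∈ extremePoints ℝ (Newton f)) : |∏ i, x i ^ β i| ≤ Ptilde f x := by
  have : Finite {β : Fin n →₀ ℕ // expR β ∈ extremePoints ℝ (Newton f)} :=
    (finite_setOf_expR_mem_newton f).subset (setOf_expR_mem_extremePoints_newton_subset f)
  exact Summable.of_finite.le_tsum (⟨β, hβ⟩ : {β // expR β ∈ extremePoints ℝ (Newton f)})
    (f := fun β : {β // expR β ∈ extremePoints ℝ (Newton f)} => |∏ i, x i ^ (β : Fin n →₀ ℕ) i|)
    fun _ _ => abs_nonneg _

lemma abs_prod_pow_le_Ptilde (x : Fin n → ℝ) {α : Fin n →₀ ℕ} (hα : expR α ∈ Newton f) :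
    |∏ i, x i ^ α i| ≤ Ptilde f x := by
  have hE : extremePoints ℝ (Newton f) ⊆ Ici 0 := fun _ hv => by
    obtain ⟨β, -, rfl⟩ := extremePoints_newton_subset f hv
    exact expR_nonneg β
  rw [← convexHull_extremePoints_newton] at hα
  obtain ⟨v, hv, hle⟩ :=
    (convexOn_prod_rpow fun i => abs_nonneg (x i)).exists_ge_of_mem_convexHull hE hα
  obtain ⟨β, -, rfl⟩ := extremePoints_newton_subset f hv
  calc |∏ i, x i ^ α i| = ∏ i, |x i| ^ expR α i := abs_prod_pow_eq_prod_rpow_expR x α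
    _ ≤ ∏ i, |x i| ^ expR β i := hle
    _ = |∏ i, x i ^ β i| := (abs_prod_pow_eq_prod_rpow_expR x β).symm
    _ ≤ Ptilde f x := abs_prod_pow_le_Ptilde_of_mem_extremePoints f x hv

lemma Ptilde_nonneg (x : Fin n → ℝ) : 0 ≤ Ptilde f x :=
  tsum_nonneg fun _ => abs_nonneg _

lemma P_le_card_mul_Ptilde (x : Fin n → ℝ) :
    P f x ≤ Nat.card {α : Fin n →₀ ℕ // expR α ∈ Newton f} * Ptilde f x := by
  have : Finite {α : Fin n →₀ ℕ // expR α ∈ Newton f} := finite_setOf_expR_mem_newton f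
  have := Fintype.ofFinite {α : Fin n →₀ ℕ // expR α ∈ Newton f}
  rw [P, tsum_fintype, Nat.card_eq_fintype_card, ← nsmul_eq_mul]
  exact Finset.sum_le_card_nsmul _ _ _ fun α _ => abs_prod_pow_le_Ptilde f x α.2

lemma Ptilde_le_P (x : Fin n → ℝ) : Ptilde f x ≤ P f x := by
  have : Finite {α : Fin n →₀ ℕ | expR α ∈ Newton f} := finite_setOf_expR_mem_newton f
  exact tsum_comp_le_tsum_of_inj Summable.of_finite
    (f := fun α : {α | expR α ∈ Newton f} => |∏ i, x i ^ (α : Fin n →₀ ℕ) i|)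
    (fun _ => abs_nonneg _)
    (inclusion_injective (setOf_expR_mem_extremePoints_newton_subset f))

end Newton

theorem stmt6_general {n : ℕ} (f : MvPolynomial (Fin n) ℝ) :
    ∃ c₁ > (0 : ℝ), ∃ c₂ > (0 : ℝ), ∀ x : Fin n → ℝ,
      c₁ * P f x ≤ Ptilde f x ∧ Ptilde f x ≤ c₂ * P f x := by
  refine ⟨(Nat.card {α : Fin n →₀ ℕ // expR α ∈ Newton f} + 1 : ℝ)⁻¹, by positivity, 1, one_pos,
    fun x => ⟨?_, by simpa using Ptilde_le_P f x⟩⟩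
  rw [inv_mul_le_iff₀ (by positivity)]
  nlinarith [P_le_card_mul_Ptilde f x, Ptilde_nonneg f x]

theorem stmt6 {n : ℕ} (f : MvPolynomial (Fin n) ℝ) (hf : f.totalDegree ≠ 0) :
    ∃ c₁ > (0 : ℝ), ∃ c₂ > (0 : ℝ), ∀ x : Fin n → ℝ,
      c₁ * P f x ≤ Ptilde f x ∧ Ptilde f x ≤ c₂ * P f x :=
  stmt6_general f
end

section
/- Let f : ℝⁿ → ℝ be a nonconstant polynomial with n ≥ 2 and 𝒫(x) = Σ_{α ∈ Γ(f) ∩ ℤ₊ⁿ}|x^α|. Suppose f|_{ℝ^J} ≢ 0 for all J ⊆ {1,…,n} and there exist σ ∈ {−1,1} and constants c₁, c₂, R > 0 with c₁𝒫(x) ≤ σf(x) ≤ c₂𝒫(x) for all ‖x‖ > R. Then Z(f) is stably compact: there is ε > 0 such that Z(f+g) is compact whenever Γ(g) ⊆ Γ(f) and ‖g‖ < ε. -/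
open MvPolynomial Set Asymptotics Filter

lemma expR_mem_Newton {n : ℕ} {f : MvPolynomial (Fin n) ℝ} {α : Fin n →₀ ℕ}
    (hα : α ∈ f.support) : expR α ∈ Newton f :=
  subset_convexHull ℝ _ ⟨α, hα, rfl⟩

lemma Newton_subset_Iic_totalDegree {n : ℕ} (f : MvPolynomial (Fin n) ℝ) :
    Newton f ⊆ Iic fun _ => (f.totalDegree : ℝ) := by
  refine convexHull_min ?_ (convex_Iic _)
  rintro _ ⟨α, hα, rfl⟩ i
  show (α i : ℝ) ≤ f.totalDegree
  exact_mod_cast (α.le_degree i).trans (le_totalDegree hα)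

lemma finite_setOf_expR_mem_Newton {n : ℕ} (f : MvPolynomial (Fin n) ℝ) :
    {α : Fin n →₀ ℕ | expR α ∈ Newton f}.Finite := by
  refine (finite_Iic (Finsupp.equivFunOnFinite.symm fun _ => f.totalDegree)).subset ?_
  intro α hα i
  simpa [expR] using Newton_subset_Iic_totalDegree f hα i

lemma sum_abs_monomial_le_P {n : ℕ} {f : MvPolynomial (Fin n) ℝ} {s : Finset (Fin n →₀ ℕ)}
    (hs : ∀ α ∈ s, expR α ∈ Newton f) (x : Fin n → ℝ) :
    ∑ α ∈ s, |∏ i, x i ^ α i| ≤ P f x := by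
  classical
  have : Finite {α : Fin n →₀ ℕ // expR α ∈ Newton f} :=
    (finite_setOf_expR_mem_Newton f).to_subtype
  rw [← Finset.sum_subtype_of_mem _ hs]
  exact Summable.of_finite.sum_le_tsum _ fun _ _ => abs_nonneg _

lemma one_le_P {n : ℕ} {f : MvPolynomial (Fin n) ℝ} (hf : constantCoeff f ≠ 0)
    (x : Fin n → ℝ) : 1 ≤ P f x := by
  have h0 : expR 0 ∈ Newton f := expR_mem_Newton (by rwa [mem_support_iff, ← constantCoeff_eq])
  simpa using sum_abs_monomial_le_P (s := {0}) (by simpa using h0) x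

lemma polyNorm_nonneg {n : ℕ} (g : MvPolynomial (Fin n) ℝ) : 0 ≤ polyNorm g :=
  Real.iSup_nonneg fun _ => Real.iSup_nonneg fun _ => abs_nonneg _

lemma abs_coeff_le_polyNorm {n : ℕ} {g : MvPolynomial (Fin n) ℝ} {α : Fin n →₀ ℕ}
    (hα : α ∈ g.support) : |g.coeff α| ≤ polyNorm g := by
  have hbdd : BddAbove (range fun β => ⨆ _ : β ∈ g.support, |g.coeff β|) := by
    refine ⟨∑ β ∈ g.support, |g.coeff β|, forall_mem_range.2 fun β => ?_⟩
    exact Real.iSup_le (fun hβ => Finset.single_le_sum (f := fun β => |g.coeff β|)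
      (fun _ _ => abs_nonneg _) hβ) (Finset.sum_nonneg fun _ _ => abs_nonneg _)
  exact le_ciSup_of_le hbdd α (by rw [ciSup_pos hα])

lemma abs_eval_le_polyNorm_mul_P {n : ℕ} {f g : MvPolynomial (Fin n) ℝ}
    (hg : Newton g ⊆ Newton f) (x : Fin n → ℝ) : |eval x g| ≤ polyNorm g * P f x :=
  calc |eval x g| ≤ ∑ α ∈ g.support, |g.coeff α| * |∏ i, x i ^ α i| := by
        rw [eval_eq']
        exact (Finset.abs_sum_le_sum_abs _ _).trans_eq (by simp only [abs_mul])
    _ ≤ ∑ α ∈ g.support, polyNorm g * |∏ i, x i ^ α i| :=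
        Finset.sum_le_sum fun α hα =>
          mul_le_mul_of_nonneg_right (abs_coeff_le_polyNorm hα) (abs_nonneg _)
    _ ≤ polyNorm g * P f x := by
        rw [← Finset.mul_sum]
        exact mul_le_mul_of_nonneg_left
          (sum_abs_monomial_le_P (fun α hα => hg (expR_mem_Newton hα)) x) (polyNorm_nonneg g)

lemma isCompact_zeroSet_of_ne_zero_off_closedBall {E : Type*} [NormedAddCommGroup E]
    [ProperSpace E] {h : E → ℝ} (hh : Continuous h) {R : ℝ} (hR : ∀ x, R < ‖x‖ → h x ≠ 0) :
    IsCompact {x | h x = 0} := by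
  refine Metric.isCompact_of_isClosed_isBounded (isClosed_eq hh continuous_const)
    (Metric.isBounded_closedBall (x := 0) (r := R) |>.subset fun x hx => ?_)
  rw [mem_closedBall_zero_iff]
  by_contra! hx_far
  exact hR x hx_far hx

theorem stmt13_general {n : ℕ} (f : MvPolynomial (Fin n) ℝ)
    (hJ : ∀ J : Set (Fin n), ∃ x : Fin n → ℝ, (∀ j ∉ J, x j = 0) ∧ eval x f ≠ 0)
    (σ : ℝ) (hσ : σ = 1 ∨ σ = -1) (c₁ c₂ R : ℝ) (hc₁ : 0 < c₁)
    (hbound : ∀ x : Fin n → ℝ, R < ‖x‖ →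
      c₁ * P f x ≤ σ * eval x f ∧ σ * eval x f ≤ c₂ * P f x) :
    StablyCompact f := by
  obtain ⟨x₀, hx₀, hfx₀⟩ := hJ ∅
  have hconst : constantCoeff f ≠ 0 := by
    rwa [show x₀ = 0 from funext fun j => hx₀ j (notMem_empty j), eval_zero] at hfx₀
  have hσ_abs : |σ| = 1 := by rcases hσ with rfl | rfl <;> norm_num
  refine ⟨c₁ / 2, by positivity, fun g hg hgε =>
    isCompact_zeroSet_of_ne_zero_off_closedBall (continuous_eval _) (R := R) fun x hx hzero => ?_⟩
  -- On `‖x‖ > R`, `|σ g(x)| < (c₁/2) 𝒫(x) < c₁ 𝒫(x) ≤ σ f(x)`, so `σ (f + g)(x) > 0`.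
  have hP : 0 < P f x := zero_lt_one.trans_le (one_le_P hconst x)
  have hg_small : |σ * eval x g| < c₁ / 2 * P f x := by
    rw [abs_mul, hσ_abs, one_mul]
    calc |eval x g| ≤ polyNorm g * P f x := abs_eval_le_polyNorm_mul_P hg x
      _ < c₁ / 2 * P f x := by gcongr
  have hsum : σ * eval x f + σ * eval x g = 0 := by rw [← mul_add, ← map_add, hzero, mul_zero]
  linarith [(hbound x hx).1, neg_abs_le (σ * eval x g), mul_pos (half_pos hc₁) hP]

theorem stmt13 {n : ℕ} (hn : 2 ≤ n) (f : MvPolynomial (Fin n) ℝ) (hf : f.totalDegree ≠ 0)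
    (hJ : ∀ J : Set (Fin n), ∃ x : Fin n → ℝ, (∀ j ∉ J, x j = 0) ∧ eval x f ≠ 0)
    (σ : ℝ) (hσ : σ = 1 ∨ σ = -1) (c₁ c₂ R : ℝ) (hc₁ : 0 < c₁) (hc₂ : 0 < c₂) (hR : 0 < R)
    (hbound : ∀ x : Fin n → ℝ, R < ‖x‖ →
      c₁ * P f x ≤ σ * eval x f ∧ σ * eval x f ≤ c₂ * P f x) :
    StablyCompact f :=
  stmt13_general f hJ σ hσ c₁ c₂ R hc₁ hbound
end

section
/- Let g₁,…,g_l, h₁,…,h_m : ℝⁿ → ℝ be polynomials and let X = {x ∈ ℝⁿ | g₁(x) = ⋯ = g_l(x) = 0, h₁(x) ≥ 0, …, h_m(x) ≥ 0}. Then X is compact if and only if the zero set in ℝⁿ × ℝᵐ of the polynomial F(x,y) = Σᵢ gᵢ(x)² + Σⱼ (hⱼ(x) − yⱼ²)² is compact. -/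
open MvPolynomial Set Asymptotics Filter

/-!
Since a sum of squares vanishes only when every term does, `F(x, y) = 0` says exactly that
`gᵢ(x) = 0` and `hⱼ(x) = yⱼ²`. So the zero set `Y` of `F` projects onto `X` (take `yⱼ = √hⱼ(x)`),
which gives compactness of `X` from that of `Y`; conversely, over a compact `X` each `hⱼ` is
bounded by some `Cⱼ`, so `Y` is a closed subset of `X × Πⱼ [-√Cⱼ, √Cⱼ]`.
-/

theorem sum_sq_add_sum_sq_eq_zero_iff {R ι κ : Type*} [Ring R] [LinearOrder R]
    [IsStrictOrderedRing R] [Fintype ι] [Fintype κ] (a : ι → R) (b : κ → R) :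
    ∑ i, a i ^ 2 + ∑ j, b j ^ 2 = 0 ↔ (∀ i, a i = 0) ∧ ∀ j, b j = 0 := by
  rw [add_eq_zero_iff_of_nonneg (by positivity) (by positivity),
    Fintype.sum_eq_zero_iff_of_nonneg (fun _ ↦ sq_nonneg _),
    Fintype.sum_eq_zero_iff_of_nonneg (fun _ ↦ sq_nonneg _)]
  simp only [funext_iff, Pi.zero_apply, sq_eq_zero_iff]

theorem image_fst_setOf_eq_sq {X ι : Type*} (K : Set X) (f : ι → X → ℝ) :
    Prod.fst '' {p : X × (ι → ℝ) | p.1 ∈ K ∧ ∀ j, f j p.1 = p.2 j ^ 2} =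
      K ∩ {x | ∀ j, 0 ≤ f j x} := by
  ext x
  constructor
  · rintro ⟨p, ⟨hK, hf⟩, rfl⟩
    exact ⟨hK, fun j ↦ hf j ▸ sq_nonneg _⟩
  · rintro ⟨hK, hf⟩
    exact ⟨(x, fun j ↦ √(f j x)), ⟨hK, fun j ↦ (Real.sq_sqrt (hf j)).symm⟩, rfl⟩

theorem isCompact_setOf_eq_sq_of_isCompact {X ι : Type*} [TopologicalSpace X]
    {K : Set X} {f : ι → X → ℝ} (hf : ∀ j, Continuous (f j))
    (hK : IsCompact (K ∩ {x | ∀ j, 0 ≤ f j x})) :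
    IsCompact {p : X × (ι → ℝ) | p.1 ∈ K ∧ ∀ j, f j p.1 = p.2 j ^ 2} := by
  have hbound (j : ι) : ∃ C, ∀ x ∈ K ∩ {x | ∀ j, 0 ≤ f j x}, ‖f j x‖ ≤ C :=
    hK.exists_bound_of_continuousOn (hf j).continuousOn
  choose C hC using hbound
  have hbox : IsCompact (Set.pi univ fun j ↦ Icc (-√(C j)) √(C j)) :=
    isCompact_univ_pi fun _ ↦ isCompact_Icc
  have hclosed : IsClosed {p : X × (ι → ℝ) | ∀ j, f j p.1 = p.2 j ^ 2} := by
    simp only [ofPred_forall]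
    exact isClosed_iInter fun j ↦ isClosed_eq (by fun_prop) (by fun_prop)
  convert (hK.prod hbox).inter_right hclosed using 1
  ext ⟨x, y⟩
  simp only [mem_ofPred_eq, mem_inter_iff, mem_prod, mem_univ_pi, mem_Icc, ← abs_le]
  constructor
  · rintro ⟨hx, hy⟩
    have hxK : x ∈ K ∩ {x | ∀ j, 0 ≤ f j x} := ⟨hx, fun j ↦ hy j ▸ sq_nonneg _⟩
    refine ⟨⟨hxK, fun j ↦ Real.abs_le_sqrt ?_⟩, hy⟩
    exact hy j ▸ (le_abs_self _).trans (hC j x hxK)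
  · rintro ⟨⟨⟨hx, -⟩, -⟩, hy⟩
    exact ⟨hx, hy⟩

theorem isCompact_setOf_eq_sq_iff {X ι : Type*} [TopologicalSpace X]
    {K : Set X} {f : ι → X → ℝ} (hf : ∀ j, Continuous (f j)) :
    IsCompact {p : X × (ι → ℝ) | p.1 ∈ K ∧ ∀ j, f j p.1 = p.2 j ^ 2} ↔
      IsCompact (K ∩ {x | ∀ j, 0 ≤ f j x}) :=
  ⟨fun hY ↦ image_fst_setOf_eq_sq K f ▸ hY.image continuous_fst,
    isCompact_setOf_eq_sq_of_isCompact hf⟩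

theorem stmt15 {n l m : ℕ} (g : Fin l → MvPolynomial (Fin n) ℝ)
    (h : Fin m → MvPolynomial (Fin n) ℝ) :
    IsCompact {x : Fin n → ℝ | (∀ i, eval x (g i) = 0) ∧ ∀ j, 0 ≤ eval x (h j)} ↔
    IsCompact {p : (Fin n → ℝ) × (Fin m → ℝ) |
      ∑ i, (eval p.1 (g i)) ^ 2 + ∑ j, (eval p.1 (h j) - p.2 j ^ 2) ^ 2 = 0} := by
  simp only [sum_sq_add_sum_sq_eq_zero_iff, sub_eq_zero]
  exact (isCompact_setOf_eq_sq_iff (K := {x | ∀ i, eval x (g i) = 0})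
    fun j ↦ continuous_eval (h j)).symm
end
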